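/- For every square-integrable random variable ξ there exist: a square-integrable H_0-measurable U_0; an admissible ℍ-predictable process H^H = (H^H_k); and a square-integrable random variable O_N with E[O_N·η] = 0 for every η ∈ L^H, such that ξ = U_0 + Σ_{k=0}^{N−1} H^H_k·ΔM_k + O_N P-almost surely. Moreover U_0 = E[ξ | H_0] P-a.s., E[O_N | H_0] = 0 P-a.s., and the decomposition is unique in the sense that for any two such decompositions the terms U_0, the sums Σ_{k=0}^{N−1} H^H_k·ΔM_k, and the terms O_N agree P-almost surely. -/

import Mathlib

/-!
Everything happens in `L²(P)`. The space `L^H` is built from `L²(ℍ 0)` by adding, one step at a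
time, the subspaces `{φ ΔM_k : φ ℍ_k-measurable}`. Each of these is closed, and it is orthogonal
to everything built before it, because a martingale increment `ΔM_k` is orthogonal to every
square-integrable `𝔽_k`-measurable variable; a sum of a closed subspace and a closed subspace of
its orthogonal complement is closed, so `L^H` is closed. Projecting `ξ` onto `L^H` gives
`U₀ + Σ H_k ΔM_k`, and `O_N` is the residual. Two residuals differ by an element of `L^H` that is
also orthogonal to `L^H`, which gives uniqueness. Finally, conditioning on `ℍ 0` kills `O_N`
(it is orthogonal to `L²(ℍ 0) ⊆ L^H`) and every `φ_k ΔM_k` (martingale property), so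
`U₀ = E[ξ | ℍ 0]`.
-/
open MeasureTheory

/-- `GKWDecomp P ℍ M N ξ U₀ ON Hh` says that `(U₀, Hh, ON)` is a
Galtchouk–Kunita–Watanabe decomposition of `ξ` under the partial information `ℍ`:
`U₀` is square-integrable and `ℍ 0`-measurable, `Hh` is an admissible `ℍ`-predictable
process, `ON` is square-integrable and orthogonal in `L²` to every element of `L^H`
(i.e. to every `V₀ + Σ_{k<N} φ_k ΔM_k` with `V₀` square-integrable `ℍ 0`-measurable and
`φ` admissible `ℍ`-predictable), and `ξ = U₀ + Σ_{k<N} Hh_k ΔM_k + ON` a.s. -/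
def GKWDecomp {Ω : Type*} {mΩ : MeasurableSpace Ω} (P : Measure Ω)
    (ℍ : Filtration ℕ mΩ) (M : ℕ → Ω → ℝ) (N : ℕ)
    (ξ U₀ ON : Ω → ℝ) (Hh : ℕ → Ω → ℝ) : Prop :=
  MemLp U₀ 2 P ∧ StronglyMeasurable[ℍ 0] U₀ ∧
  (∀ k, StronglyMeasurable[ℍ k] (Hh k)) ∧
  (∀ k, MemLp (fun ω => Hh k ω * (M (k + 1) ω - M k ω)) 2 P) ∧
  MemLp ON 2 P ∧
  (∀ (V₀ : Ω → ℝ) (φ : ℕ → Ω → ℝ), MemLp V₀ 2 P → StronglyMeasurable[ℍ 0] V₀ →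
    (∀ k, StronglyMeasurable[ℍ k] (φ k)) →
    (∀ k, MemLp (fun ω => φ k ω * (M (k + 1) ω - M k ω)) 2 P) →
    ∫ ω, ON ω * (V₀ ω + ∑ k ∈ Finset.range N, φ k ω * (M (k + 1) ω - M k ω)) ∂P = 0) ∧
  (ξ =ᵐ[P] fun ω =>
    U₀ ω + (∑ k ∈ Finset.range N, Hh k ω * (M (k + 1) ω - M k ω)) + ON ω)

open Filter Topology Finset

namespace Submodule

variable {𝕜 E : Type*} [RCLike 𝕜] [NormedAddCommGroup E] [InnerProductSpace 𝕜 E]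

theorem isClosed_sup_of_le_orthogonal {A B : Submodule 𝕜 E} [A.HasOrthogonalProjection]
    (hB : IsClosed (B : Set E)) (hBA : B ≤ Aᗮ) :
    IsClosed ((A ⊔ B : Submodule 𝕜 E) : Set E) := by
  have hsup : ((A ⊔ B : Submodule 𝕜 E) : Set E) = (fun x => x - A.starProjection x) ⁻¹' B := by
    ext x
    refine ⟨fun hx => ?_, fun hx => ?_⟩
    · obtain ⟨a, ha, b, hb, rfl⟩ := mem_sup.mp hx
      simpa [A.starProjection_eq_self_iff.mpr ha,
        (A.starProjection_apply_eq_zero_iff).mpr (hBA hb)] using hb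
    · simpa using add_mem_sup (A.starProjection_apply_mem x) hx
  rw [hsup]
  exact hB.preimage (continuous_id.sub A.starProjection.continuous)

end Submodule

section L2

variable {Ω : Type*}

theorem MeasureTheory.Lp.real_inner_eq_integral [MeasurableSpace Ω] {P : Measure Ω} {f g : Lp ℝ 2 P}
    {F G : Ω → ℝ} (hf : f =ᵐ[P] F) (hg : g =ᵐ[P] G) : inner ℝ f g = ∫ ω, F ω * G ω ∂P := by
  rw [L2.inner_def]
  refine integral_congr_ae ?_
  filter_upwards [hf, hg] with ω h₁ h₂
  simp [h₁, h₂, mul_comm]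

noncomputable def lpMeasMul (m : MeasurableSpace Ω) [MeasurableSpace Ω] (g : Ω → ℝ)
    (P : Measure Ω) : Submodule ℝ (Lp ℝ 2 P) where
  carrier := {f | ∃ φ : Ω → ℝ, StronglyMeasurable[m] φ ∧ f =ᵐ[P] φ * g}
  add_mem' := by
    rintro f f' ⟨φ, hφ, hf⟩ ⟨φ', hφ', hf'⟩
    refine ⟨φ + φ', hφ.add hφ', ?_⟩
    filter_upwards [Lp.coeFn_add f f', hf, hf'] with ω h h₁ h₂
    rw [h, Pi.add_apply, h₁, h₂]
    exact (add_mul ..).symm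
  zero_mem' := ⟨0, stronglyMeasurable_const, by
    filter_upwards [Lp.coeFn_zero ℝ 2 P] with ω h
    rw [h]
    exact (zero_mul _).symm⟩
  smul_mem' := by
    rintro c f ⟨φ, hφ, hf⟩
    refine ⟨c • φ, hφ.const_smul c, ?_⟩
    filter_upwards [Lp.coeFn_smul c f, hf] with ω h h₁
    rw [h, Pi.smul_apply, h₁]
    exact (mul_assoc ..).symm

theorem isClosed_lpMeasMul (m : MeasurableSpace Ω) [MeasurableSpace Ω] (g : Ω → ℝ)
    (P : Measure Ω) : IsClosed (lpMeasMul m g P : Set (Lp ℝ 2 P)) := by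
  refine IsSeqClosed.isClosed fun u f hu huf => ?_
  choose φ hφ hu using hu
  obtain ⟨ns, -, hns⟩ := (tendstoInMeasure_of_tendsto_Lp huf).exists_seq_tendsto_ae
  refine ⟨fun ω => limUnder atTop (fun i => φ (ns i) ω),
    by let := m; exact StronglyMeasurable.limUnder fun i => hφ (ns i), ?_⟩
  filter_upwards [hns, ae_all_iff.mpr fun i => hu (ns i)] with ω hlim hu
  simp only [hu, Pi.mul_apply] at hlim
  by_cases hg : g ω = 0
  · simpa [hg] using tendsto_nhds_unique hlim (by simp [hg])
  · have hφlim : Tendsto (fun i => φ (ns i) ω) atTop (𝓝 (f ω / g ω)) :=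
      (hlim.div_const (g ω)).congr fun i => mul_div_cancel_right₀ _ hg
    rw [Pi.mul_apply, hφlim.limUnder_eq, div_mul_cancel₀ _ hg]

end L2

section Martingale

variable {Ω : Type*} {mΩ : MeasurableSpace Ω} {P : Measure Ω} [IsFiniteMeasure P]
  {𝔽 : Filtration ℕ mΩ} {M : ℕ → Ω → ℝ} {i j : ℕ} {Y : Ω → ℝ}

theorem Martingale.condExp_mul_sub_ae_eq_zero (hM : Martingale M 𝔽 P) (hij : i ≤ j)
    (hY : StronglyMeasurable[𝔽 i] Y) (hYM : Integrable (Y * (M j - M i)) P) :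
    P[Y * (M j - M i) | 𝔽 i] =ᵐ[P] 0 := by
  have hΔ : P[M j - M i | 𝔽 i] =ᵐ[P] 0 := by
    filter_upwards [condExp_sub (hM.integrable j) (hM.integrable i) (𝔽 i),
      hM.condExp_ae_eq hij] with ω h₁ h₂
    simp [h₁, h₂, condExp_of_stronglyMeasurable (𝔽.le i) (hM.stronglyAdapted i)
      (hM.integrable i)]
  filter_upwards [condExp_mul_of_stronglyMeasurable_left hY hYM
    ((hM.integrable j).sub (hM.integrable i)), hΔ] with ω h₁ h₂
  simp [h₁, h₂]

theorem Martingale.integral_mul_sub_eq_zero (hM : Martingale M 𝔽 P) (hij : i ≤ j)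
    (hY : StronglyMeasurable[𝔽 i] Y) (hYM : Integrable (Y * (M j - M i)) P) :
    ∫ ω, Y ω * (M j ω - M i ω) ∂P = 0 :=
  (integral_condExp (𝔽.le i)).symm.trans <|
    (integral_congr_ae (Martingale.condExp_mul_sub_ae_eq_zero hM hij hY hYM)).trans (by simp)

end Martingale

theorem condExp_ae_eq_zero_of_toLp_mem_orthogonal {Ω : Type*} {m mΩ : MeasurableSpace Ω}
    {P : Measure Ω} [IsFiniteMeasure P] (hm : m ≤ mΩ) {f : Ω → ℝ} (hf : MemLp f 2 P)
    (horth : hf.toLp f ∈ (lpMeas ℝ ℝ m 2 P)ᗮ) : P[f | m] =ᵐ[P] 0 := by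
  have : Fact (m ≤ mΩ) := ⟨hm⟩
  have hzero : condExpL2 ℝ ℝ hm (hf.toLp f) = 0 :=
    (lpMeas ℝ ℝ m 2 P).orthogonalProjectionOnto_eq_zero_iff.mpr horth
  refine (hf.condExpL2_ae_eq_condExp (𝕜 := ℝ) hm).symm.trans ?_
  rw [hzero]
  exact Lp.coeFn_zero ℝ 2 P

section PartialInformation

variable {Ω : Type*} {mΩ : MeasurableSpace Ω} {P : Measure Ω}
  {𝔽 ℍ : Filtration ℕ mΩ} {M : ℕ → Ω → ℝ} {N : ℕ} {ξ U₀ ON : Ω → ℝ} {Hh : ℕ → Ω → ℝ}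

theorem memLp_add_sum_mul_increment {φ : ℕ → Ω → ℝ} (hU₀ : MemLp U₀ 2 P)
    (hφM : ∀ k, MemLp (fun ω => φ k ω * (M (k + 1) ω - M k ω)) 2 P) (n : ℕ) :
    MemLp (fun ω => U₀ ω + ∑ k ∈ range n, φ k ω * (M (k + 1) ω - M k ω)) 2 P :=
  hU₀.add (memLp_finsetSum _ fun k _ => hφM k)

variable (P ℍ M) in
/-- `partialInfoSpace P ℍ M N` is the space `L^H` of the paper, as a subspace of `L²(P)`. -/
noncomputable def partialInfoSpace : ℕ → Submodule ℝ (Lp ℝ 2 P)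
  | 0 => lpMeas ℝ ℝ (ℍ 0) 2 P
  | n + 1 => partialInfoSpace n ⊔ lpMeasMul (ℍ n) (M (n + 1) - M n) P

theorem partialInfoSpace_mono : Monotone (partialInfoSpace P ℍ M) :=
  monotone_nat_of_le_succ fun _ => le_sup_left

theorem mem_partialInfoSpace_iff {n : ℕ} {f : Lp ℝ 2 P} :
    f ∈ partialInfoSpace P ℍ M n ↔
      ∃ (U₀ : Ω → ℝ) (φ : ℕ → Ω → ℝ), MemLp U₀ 2 P ∧ StronglyMeasurable[ℍ 0] U₀ ∧
        (∀ k, StronglyMeasurable[ℍ k] (φ k)) ∧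
        (∀ k, MemLp (fun ω => φ k ω * (M (k + 1) ω - M k ω)) 2 P) ∧
        f =ᵐ[P] fun ω => U₀ ω + ∑ k ∈ range n, φ k ω * (M (k + 1) ω - M k ω) := by
  induction n generalizing f with
  | zero =>
    refine ⟨fun ⟨U₀, hU₀, hf⟩ => ⟨U₀, 0, (Lp.memLp f).ae_eq hf, hU₀,
      fun _ => stronglyMeasurable_const, fun _ => by simp, by simpa using hf⟩, ?_⟩
    rintro ⟨U₀, φ, -, hU₀, -, -, hf⟩
    exact ⟨U₀, hU₀, by simpa using hf⟩
  | succ n ih =>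
    constructor
    · intro hf
      obtain ⟨y, hy, z, ⟨ψ, hψ, hz⟩, rfl⟩ := Submodule.mem_sup.mp hf
      obtain ⟨U₀, φ, hU, hU₀, hφ, hφM, hy⟩ := ih.mp hy
      refine ⟨U₀, Function.update φ n ψ, hU, hU₀, fun k => ?_, fun k => ?_, ?_⟩
      · rcases eq_or_ne k n with rfl | hk <;> simp [*]
      · rcases eq_or_ne k n with rfl | hk
        · simp only [Function.update_self]
          exact (Lp.memLp z).ae_eq hz
        · simpa [hk] using hφM k
      · have hsum (ω : Ω) : ∑ k ∈ range n, Function.update φ n ψ k ω * (M (k + 1) ω - M k ω) =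
            ∑ k ∈ range n, φ k ω * (M (k + 1) ω - M k ω) :=
          sum_congr rfl fun k hk => by rw [Function.update_of_ne (mem_range.mp hk).ne]
        filter_upwards [Lp.coeFn_add y z, hy, hz] with ω h h₁ h₂
        rw [h, Pi.add_apply, h₁, h₂, sum_range_succ, hsum, Function.update_self, add_assoc]
        rfl
    · rintro ⟨U₀, φ, hU, hU₀, hφ, hφM, hf⟩
      have hy := memLp_add_sum_mul_increment hU hφM n
      refine Submodule.mem_sup.mpr ⟨hy.toLp _, ih.mpr ⟨U₀, φ, hU, hU₀, hφ, hφM, hy.coeFn_toLp⟩,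
        (hφM n).toLp _, ⟨φ n, hφ n, (hφM n).coeFn_toLp⟩, Lp.ext ?_⟩
      filter_upwards [Lp.coeFn_add (hy.toLp _) ((hφM n).toLp _), hy.coeFn_toLp,
        (hφM n).coeFn_toLp, hf] with ω h h₁ h₂ h₃
      rw [h, Pi.add_apply, h₁, h₂, h₃, sum_range_succ, add_assoc]

theorem lpMeasMul_le_orthogonal_partialInfoSpace [IsFiniteMeasure P] (hle : ∀ k, ℍ k ≤ 𝔽 k)
    (hM : Martingale M 𝔽 P) (n : ℕ) :
    lpMeasMul (ℍ n) (M (n + 1) - M n) P ≤ (partialInfoSpace P ℍ M n)ᗮ := by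
  rintro w ⟨ψ, hψ, hw⟩
  refine (Submodule.mem_orthogonal _ _).mpr fun v hv => ?_
  obtain ⟨U₀, φ, -, hU₀, hφ, -, hv⟩ := mem_partialInfoSpace_iff.mp hv
  have hX : StronglyMeasurable[𝔽 n]
      (fun ω => U₀ ω + ∑ k ∈ range n, φ k ω * (M (k + 1) ω - M k ω)) := by
    refine (hU₀.mono ((ℍ.mono n.zero_le).trans (hle n))).add
      (Finset.stronglyMeasurable_fun_sum _ fun k hk => ?_)
    have hk : k < n := mem_range.mp hk
    exact ((hφ k).mono ((ℍ.mono hk.le).trans (hle n))).mul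
      (((hM.stronglyAdapted _).mono (𝔽.mono hk)).sub
        ((hM.stronglyAdapted _).mono (𝔽.mono hk.le)))
  have hint : Integrable (fun ω => v ω * w ω) P := (Lp.memLp v).integrable_mul (Lp.memLp w)
  rw [Lp.real_inner_eq_integral hv hw, ← Martingale.integral_mul_sub_eq_zero hM n.le_succ
    (hX.mul (hψ.mono (hle n))) (hint.congr ?_)]
  · exact integral_congr_ae (Eventually.of_forall fun ω => by
      simp only [Pi.mul_apply, Pi.sub_apply]; ring)
  filter_upwards [hv, hw] with ω h₁ h₂
  simp only [Pi.mul_apply, Pi.sub_apply, h₁, h₂]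
  ring

theorem isClosed_partialInfoSpace [IsFiniteMeasure P] (hle : ∀ k, ℍ k ≤ 𝔽 k)
    (hM : Martingale M 𝔽 P) (n : ℕ) :
    IsClosed (partialInfoSpace P ℍ M n : Set (Lp ℝ 2 P)) := by
  induction n with
  | zero => exact isClosed_aestronglyMeasurable (ℍ.le 0)
  | succ n ih =>
    have : CompleteSpace (partialInfoSpace P ℍ M n) := ih.completeSpace_coe
    exact Submodule.isClosed_sup_of_le_orthogonal (isClosed_lpMeasMul _ _ P)
      (lpMeasMul_le_orthogonal_partialInfoSpace hle hM n)

theorem forall_integral_mul_eq_zero_iff_mem_orthogonal {O : Ω → ℝ} {f : Lp ℝ 2 P}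
    (hf : f =ᵐ[P] O) (n : ℕ) :
    (∀ (V₀ : Ω → ℝ) (φ : ℕ → Ω → ℝ), MemLp V₀ 2 P → StronglyMeasurable[ℍ 0] V₀ →
      (∀ k, StronglyMeasurable[ℍ k] (φ k)) →
      (∀ k, MemLp (fun ω => φ k ω * (M (k + 1) ω - M k ω)) 2 P) →
      ∫ ω, O ω * (V₀ ω + ∑ k ∈ range n, φ k ω * (M (k + 1) ω - M k ω)) ∂P = 0) ↔
    f ∈ (partialInfoSpace P ℍ M n)ᗮ := by
  rw [Submodule.mem_orthogonal']
  constructor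
  · intro h v hv
    obtain ⟨V₀, φ, hV, hV₀, hφ, hφM, hv⟩ := mem_partialInfoSpace_iff.mp hv
    rw [Lp.real_inner_eq_integral hf hv]
    exact h V₀ φ hV hV₀ hφ hφM
  · intro h V₀ φ hV hV₀ hφ hφM
    have hX := memLp_add_sum_mul_increment hV hφM n
    rw [← Lp.real_inner_eq_integral hf hX.coeFn_toLp]
    exact h _ (mem_partialInfoSpace_iff.mpr ⟨V₀, φ, hV, hV₀, hφ, hφM, hX.coeFn_toLp⟩)

theorem exists_gkwDecomp (hK : IsClosed (partialInfoSpace P ℍ M N : Set (Lp ℝ 2 P)))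
    (hξ : MemLp ξ 2 P) : ∃ U₀ ON Hh, GKWDecomp P ℍ M N ξ U₀ ON Hh := by
  set K := partialInfoSpace P ℍ M N
  have : CompleteSpace K := hK.completeSpace_coe
  obtain ⟨U₀, Hh, hU, hU₀, hH, hHM, hproj⟩ :=
    mem_partialInfoSpace_iff.mp (K.starProjection_apply_mem (hξ.toLp ξ))
  have hS := memLp_add_sum_mul_increment hU hHM N
  have hON := hξ.sub hS
  have hresid : hON.toLp _ = hξ.toLp ξ - K.starProjection (hξ.toLp ξ) := by
    refine Lp.ext ?_
    filter_upwards [hON.coeFn_toLp, Lp.coeFn_sub (hξ.toLp ξ) (K.starProjection (hξ.toLp ξ)),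
      hξ.coeFn_toLp, hproj] with ω h₁ h₂ h₃ h₄
    simp only [h₁, h₂, Pi.sub_apply, h₃, h₄]
  refine ⟨U₀, _, Hh, hU, hU₀, hH, hHM, hON,
    (forall_integral_mul_eq_zero_iff_mem_orthogonal hON.coeFn_toLp N).mpr
      (hresid ▸ K.sub_starProjection_mem_orthogonal _),
    Eventually.of_forall fun ω => ?_⟩
  simp

namespace GKWDecomp

theorem memLp_orth (h : GKWDecomp P ℍ M N ξ U₀ ON Hh) : MemLp ON 2 P :=
  h.2.2.2.2.1

theorem mem_orthogonal (h : GKWDecomp P ℍ M N ξ U₀ ON Hh) {f : Lp ℝ 2 P} (hf : f =ᵐ[P] ON) :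
    f ∈ (partialInfoSpace P ℍ M N)ᗮ :=
  (forall_integral_mul_eq_zero_iff_mem_orthogonal hf N).mp h.2.2.2.2.2.1

theorem sub_mem (h : GKWDecomp P ℍ M N ξ U₀ ON Hh) {f : Lp ℝ 2 P} (hf : f =ᵐ[P] ξ - ON) :
    f ∈ partialInfoSpace P ℍ M N := by
  obtain ⟨hU, hU₀, hH, hHM, -, -, hξ⟩ := h
  refine mem_partialInfoSpace_iff.mpr ⟨U₀, Hh, hU, hU₀, hH, hHM, ?_⟩
  filter_upwards [hf, hξ] with ω h₁ h₂
  rw [h₁, Pi.sub_apply, h₂, add_sub_cancel_right]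

theorem orth_ae_eq {U₀' ON' : Ω → ℝ} {Hh' : ℕ → Ω → ℝ} (hξ : MemLp ξ 2 P)
    (h : GKWDecomp P ℍ M N ξ U₀ ON Hh) (h' : GKWDecomp P ℍ M N ξ U₀' ON' Hh') :
    ON =ᵐ[P] ON' := by
  have hON := h.memLp_orth
  have hON' := h'.memLp_orth
  set K := partialInfoSpace P ℍ M N
  have hsub (O : Ω → ℝ) (hO : MemLp O 2 P) : hξ.toLp ξ - hO.toLp O =ᵐ[P] ξ - O := by
    filter_upwards [Lp.coeFn_sub (hξ.toLp ξ) (hO.toLp O), hξ.coeFn_toLp, hO.coeFn_toLp]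
      with ω h₁ h₂ h₃
    rw [h₁, Pi.sub_apply, h₂, h₃, Pi.sub_apply]
  have hK : hON'.toLp ON' - hON.toLp ON ∈ K := by
    simpa only [sub_sub_sub_cancel_left] using
      K.sub_mem (h.sub_mem (hsub ON hON)) (h'.sub_mem (hsub ON' hON'))
  have hK' : hON'.toLp ON' - hON.toLp ON ∈ Kᗮ :=
    Kᗮ.sub_mem (h'.mem_orthogonal hON'.coeFn_toLp) (h.mem_orthogonal hON.coeFn_toLp)
  have hzero := (Submodule.mem_bot ℝ).mp (K.orthogonal_disjoint.le_bot ⟨hK, hK'⟩)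
  filter_upwards [hON.coeFn_toLp, hON'.coeFn_toLp] with ω h₁ h₂
  rw [← h₁, ← h₂, sub_eq_zero.mp hzero]

end GKWDecomp

section FiniteMeasure

variable [IsFiniteMeasure P]

theorem condExp_sum_mul_increment_ae_eq_zero (hle : ∀ k, ℍ k ≤ 𝔽 k) (hM : Martingale M 𝔽 P)
    {φ : ℕ → Ω → ℝ} (hφ : ∀ k, StronglyMeasurable[ℍ k] (φ k))
    (hφM : ∀ k, Integrable (fun ω => φ k ω * (M (k + 1) ω - M k ω)) P) (n : ℕ) :
    P[fun ω => ∑ k ∈ range n, φ k ω * (M (k + 1) ω - M k ω) | ℍ 0] =ᵐ[P] 0 := by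
  have hk (k : ℕ) : P[fun ω => φ k ω * (M (k + 1) ω - M k ω) | ℍ 0] =ᵐ[P] 0 :=
    (condExp_condExp_of_le ((ℍ.mono k.zero_le).trans (hle k)) (𝔽.le k)).symm.trans <|
      (condExp_congr_ae (Martingale.condExp_mul_sub_ae_eq_zero hM k.le_succ
        ((hφ k).mono (hle k)) (hφM k))).trans (by rw [condExp_zero])
  rw [← Finset.sum_fn]
  filter_upwards [condExp_finsetSum (s := range n) (fun k _ => hφM k) (ℍ 0), ae_all_iff.mpr hk]
    with ω h h₀
  simp [h, Finset.sum_apply, h₀]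

namespace GKWDecomp

theorem condExp_orth_ae_eq_zero (h : GKWDecomp P ℍ M N ξ U₀ ON Hh) : P[ON | ℍ 0] =ᵐ[P] 0 := by
  have hON := h.memLp_orth
  exact condExp_ae_eq_zero_of_toLp_mem_orthogonal (ℍ.le 0) hON <|
    Submodule.orthogonal_le (partialInfoSpace_mono N.zero_le) (h.mem_orthogonal hON.coeFn_toLp)

theorem ae_eq_condExp (hle : ∀ k, ℍ k ≤ 𝔽 k) (hM : Martingale M 𝔽 P)
    (h : GKWDecomp P ℍ M N ξ U₀ ON Hh) : U₀ =ᵐ[P] P[ξ | ℍ 0] := by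
  have hON₀ := h.condExp_orth_ae_eq_zero
  obtain ⟨hU, hU₀, hH, hHM, hON, -, hξ⟩ := h
  set S : Ω → ℝ := fun ω => ∑ k ∈ range N, Hh k ω * (M (k + 1) ω - M k ω)
  have hS : MemLp S 2 P := memLp_finsetSum (range N) fun k _ => hHM k
  have hS₀ : P[S | ℍ 0] =ᵐ[P] 0 := condExp_sum_mul_increment_ae_eq_zero hle hM hH
    (fun k => (hHM k).integrable one_le_two) N
  have hint (f : Ω → ℝ) (hf : MemLp f 2 P) : Integrable f P := hf.integrable one_le_two
  have hξ' : ξ =ᵐ[P] U₀ + S + ON := hξ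
  filter_upwards [condExp_congr_ae (m := ℍ 0) hξ',
    condExp_add ((hint _ hU).add (hint _ hS)) (hint _ hON) (ℍ 0),
    condExp_add (hint _ hU) (hint _ hS) (ℍ 0), hS₀, hON₀] with ω h₁ h₂ h₃ h₄ h₅
  rw [h₁, h₂, Pi.add_apply, h₃, Pi.add_apply, h₄, h₅,
    condExp_of_stronglyMeasurable (ℍ.le 0) hU₀ (hint _ hU)]
  simp

end GKWDecomp

end FiniteMeasure

end PartialInformation

theorem stmt_9 {Ω : Type*} {mΩ : MeasurableSpace Ω} {P : Measure Ω} [IsProbabilityMeasure P]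
    (N : ℕ) (𝔽 ℍ : Filtration ℕ mΩ) (hle : ∀ k, ℍ k ≤ 𝔽 k)
    (M : ℕ → Ω → ℝ) (hM : Martingale M 𝔽 P)
    (ξ : Ω → ℝ) (hξ : MemLp ξ 2 P) :
    (∃ (U₀ ON : Ω → ℝ) (Hh : ℕ → Ω → ℝ),
        GKWDecomp P ℍ M N ξ U₀ ON Hh ∧
        U₀ =ᵐ[P] P[ξ | ℍ 0] ∧
        P[ON | ℍ 0] =ᵐ[P] 0) ∧
    (∀ (U₀ ON : Ω → ℝ) (Hh : ℕ → Ω → ℝ) (U₀' ON' : Ω → ℝ) (Hh' : ℕ → Ω → ℝ),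
        GKWDecomp P ℍ M N ξ U₀ ON Hh → GKWDecomp P ℍ M N ξ U₀' ON' Hh' →
        U₀ =ᵐ[P] U₀' ∧
        (fun ω => ∑ k ∈ Finset.range N, Hh k ω * (M (k + 1) ω - M k ω)) =ᵐ[P]
          (fun ω => ∑ k ∈ Finset.range N, Hh' k ω * (M (k + 1) ω - M k ω)) ∧
        ON =ᵐ[P] ON') := by
  refine ⟨?_, fun U₀ ON Hh U₀' ON' Hh' h h' => ?_⟩
  · obtain ⟨U₀, ON, Hh, h⟩ := exists_gkwDecomp (isClosed_partialInfoSpace hle hM N) hξ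
    exact ⟨U₀, ON, Hh, h, h.ae_eq_condExp hle hM, h.condExp_orth_ae_eq_zero⟩
  · have hU := (h.ae_eq_condExp hle hM).trans (h'.ae_eq_condExp hle hM).symm
    have hO := h.orth_ae_eq hξ h'
    obtain ⟨-, -, -, -, -, -, hξ₁⟩ := h
    obtain ⟨-, -, -, -, -, -, hξ₂⟩ := h'
    refine ⟨hU, ?_, hO⟩
    filter_upwards [hξ₁, hξ₂, hU, hO] with ω h₁ h₂ hU hO
    linarith
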